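/- arXiv:1512.07106 — 3 statements merged into one kernel-verified Lean document; each statement's English description precedes it below -/
import Mathlib

section
/- Let W = ⊗_{j=1}^n T_j^{PA_j I_j} where each T_j is diagonal in a fixed product (pointer) basis with nonnegative diagonal entries P(z_j | pa_j) summing to 1 over z_j for each pa_j. Let each local operation be diagonal of the form M̄_{x_j|i_j} = Σ_{z_j, o_j} P(o_j | x_j) P(x_j | z_j, i_j) |z_j⟩⟨z_j| ⊗ |o_j⟩⟨o_j|, with conditional probabilities factorising as P(o_j, x_j | z_j, i_j) = P(o_j|x_j)P(x_j|z_j,i_j). Then the resulting probability P(x_1,…,x_n | i_1,…,i_n) = Tr[⊗_j M̄_{x_j|i_j} · W] equals the product Π_j P(x_j | pa_j, i_j), where pa_j denotes the tuple of outcomes x_k at the parent laboratories of j in the DAG; i.e., the classical causal Markov condition holds. -/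
/-!
In the pointer basis every operator is diagonal, so the trace is a sum over classical
configurations `a = (z_j, s_j)_j` of the product of the local weights
`P(s_j | x_j) P(x_j | z_j, i_j)` and of the mechanisms `P(z_j | s_{PA_j})`. Each edge
signal is produced at its source and read at its target, so regrouping the signals by
target laboratory turns the sum into a product over laboratories of independent sums; the
`j`-th sum is a composition of stochastic kernels `x_{PA_j} ↦ s ↦ z_j ↦ x_j`, hence itself a
conditional distribution of `x_j` given the parent outcomes and `i_j`.
-/

section Diagonal

variable {ι R : Type*} [Fintype ι] [CommSemiring R] {κ : ι → Type*}
  [∀ j, DecidableEq (κ j)]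

theorem Matrix.of_prod_diagonal (d : ∀ j, κ j → R) :
    (Matrix.of fun a b : (∀ j, κ j) => ∏ j, diagonal (d j) (a j) (b j))
      = diagonal fun a => ∏ j, d j (a j) := by
  ext a b
  by_cases hab : a = b
  · subst hab
    simp
  · obtain ⟨j, hj⟩ := Function.ne_iff.mp hab
    rw [of_apply, diagonal_apply_ne _ hab]
    exact Finset.prod_eq_zero (Finset.mem_univ j) (diagonal_apply_ne _ hj)

end Diagonal

section Stochastic

variable {α β R : Type*} [Fintype α] [Fintype β] [CommSemiring R]

theorem sum_sum_mul_eq_one_of_sum_eq_one {f : α → R} {k : α → β → R}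
    (hf : ∑ a, f a = 1) (hk : ∀ a, ∑ b, k a b = 1) :
    ∑ b, ∑ a, f a * k a b = 1 := by
  rw [Finset.sum_comm]
  simp_rw [← Finset.mul_sum, hk, mul_one, hf]

theorem sum_prod_eq_one_of_sum_eq_one {ι : Type*} [Fintype ι] [DecidableEq ι]
    {κ : ι → Type*} [∀ j, Fintype (κ j)] {f : ∀ j, κ j → R} (hf : ∀ j, ∑ t, f j t = 1) :
    ∑ t : (∀ j, κ j), ∏ j, f j (t j) = 1 := by
  rw [← Fintype.prod_sum]
  simp [hf]

end Stochastic

theorem Fintype.prod_fiberwise_subtype {α β M : Type*} [Fintype α] [DecidableEq α]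
    [Fintype β] [DecidableEq β] [CommMonoid M] (s : Finset α) (g : α → β) (f : s → M) :
    ∏ b, ∏ a : {a // a ∈ s ∧ g a = b}, f ⟨a.1, a.2.1⟩ = ∏ a, f a := by
  rw [← Fintype.prod_fiberwise (fun a : s => g a)]
  exact Fintype.prod_congr _ _ fun b =>
    (Fintype.prod_equiv (Equiv.subtypeSubtypeEquivSubtypeInter (· ∈ s) (g · = b)) _ _
      fun _ => rfl).symm

section CausalModel

variable {n : ℕ} (E : Finset (Fin n × Fin n)) {X Z I : Fin n → Type}

def regroupByTarget (X Z : Fin n → Type) :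
    (∀ j, Z j × (∀ _e : {e : Fin n × Fin n // e ∈ E ∧ e.1 = j}, X j))
      ≃ (∀ j, Z j × (∀ e : {e : Fin n × Fin n // e ∈ E ∧ e.2 = j}, X e.1.1)) where
  toFun a j := ((a j).1, fun e => (a e.1.1).2 ⟨e.1, e.2.1, rfl⟩)
  invFun b j := ((b j).1, fun e => e.2.2 ▸ (b e.1.2).2 ⟨e.1, e.2.1, rfl⟩)
  left_inv a := by
    funext j
    refine Prod.ext rfl (funext ?_)
    rintro ⟨e, he, rfl⟩
    rfl
  right_inv b := by
    funext j
    refine Prod.ext rfl (funext ?_)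
    rintro ⟨e, he, rfl⟩
    rfl

variable [∀ j, Fintype (X j)] [∀ j, Fintype (Z j)]

/-- `P(x_j | pa_j, i_j)`: the edge signals into `j` are emitted by the parents from their
outcomes `pa_j`, then `z_j` is drawn from the mechanism and `x_j` is measured. -/
def classicalKernel
    (Pz : ∀ j, (∀ e : {e : Fin n × Fin n // e ∈ E ∧ e.2 = j}, X e.1.1) → Z j → ℝ)
    (Po : ∀ j, ∀ _e : {e : Fin n × Fin n // e ∈ E ∧ e.1 = j}, X j → X j → ℝ)
    (Px : ∀ j, Z j → I j → X j → ℝ) (j : Fin n)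
    (pa : ∀ e : {e : Fin n × Fin n // e ∈ E ∧ e.2 = j}, X e.1.1) (i : I j) (x : X j) : ℝ :=
  ∑ p : Z j × (∀ e : {e : Fin n × Fin n // e ∈ E ∧ e.2 = j}, X e.1.1),
    (∏ e, Po e.1.1 ⟨e.1, e.2.1, rfl⟩ (p.2 e) (pa e)) * Pz j p.2 p.1 * Px j p.1 i x

variable {E}
variable {Pz : ∀ j, (∀ e : {e : Fin n × Fin n // e ∈ E ∧ e.2 = j}, X e.1.1) → Z j → ℝ}
  {Po : ∀ j, ∀ _e : {e : Fin n × Fin n // e ∈ E ∧ e.1 = j}, X j → X j → ℝ}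
  {Px : ∀ j, Z j → I j → X j → ℝ}

theorem classicalKernel_nonneg (hPz0 : ∀ j pa z, 0 ≤ Pz j pa z)
    (hPo0 : ∀ j e s x, 0 ≤ Po j e s x) (hPx0 : ∀ j z i x, 0 ≤ Px j z i x) (j : Fin n)
    (pa : ∀ e : {e : Fin n × Fin n // e ∈ E ∧ e.2 = j}, X e.1.1) (i : I j) (x : X j) :
    0 ≤ classicalKernel E Pz Po Px j pa i x :=
  Finset.sum_nonneg fun _ _ => mul_nonneg (mul_nonneg
    (Finset.prod_nonneg fun _ _ => hPo0 _ _ _ _) (hPz0 _ _ _)) (hPx0 _ _ _ _)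

theorem sum_classicalKernel (hPz1 : ∀ j pa, ∑ z, Pz j pa z = 1)
    (hPo1 : ∀ j e x, ∑ s, Po j e s x = 1) (hPx1 : ∀ j z i, ∑ x, Px j z i x = 1) (j : Fin n)
    (pa : ∀ e : {e : Fin n × Fin n // e ∈ E ∧ e.2 = j}, X e.1.1) (i : I j) :
    ∑ x, classicalKernel E Pz Po Px j pa i x = 1 := by
  have hsignals : ∑ t : (∀ e : {e : Fin n × Fin n // e ∈ E ∧ e.2 = j}, X e.1.1),
      ∏ e, Po e.1.1 ⟨e.1, e.2.1, rfl⟩ (t e) (pa e) = 1 :=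
    sum_prod_eq_one_of_sum_eq_one fun e => hPo1 _ _ _
  have hjoint := sum_sum_mul_eq_one_of_sum_eq_one hsignals (hPz1 j)
  rw [← Fintype.sum_prod_type'] at hjoint
  unfold classicalKernel
  exact sum_sum_mul_eq_one_of_sum_eq_one hjoint fun p => hPx1 j p.1 i

theorem sum_prod_eq_prod_classicalKernel (x : ∀ j, X j) (i : ∀ j, I j) :
    ∑ a : (∀ j, Z j × (∀ _e : {e : Fin n × Fin n // e ∈ E ∧ e.1 = j}, X j)),
        (∏ j, (∏ e, Po j e ((a j).2 e) (x j)) * Px j (a j).1 (i j) (x j))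
          * ∏ j, Pz j (fun e => (a e.1.1).2 ⟨e.1, e.2.1, rfl⟩) (a j).1
      = ∏ j, classicalKernel E Pz Po Px j (fun e => x e.1.1) (i j) (x j) := by
  unfold classicalKernel
  rw [Fintype.prod_sum, ← (regroupByTarget E X Z).sum_comp]
  refine Fintype.sum_congr _ _ fun a => ?_
  let signal : {e // e ∈ E} → ℝ := fun e =>
    Po e.1.1 ⟨e.1, e.2, rfl⟩ ((a e.1.1).2 ⟨e.1, e.2, rfl⟩) (x e.1.1)
  have hsignals : ∏ j, ∏ e, Po j e ((a j).2 e) (x j)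
      = ∏ j, ∏ e : {e : Fin n × Fin n // e ∈ E ∧ e.2 = j}, signal ⟨e.1, e.2.1⟩ := by
    rw [Fintype.prod_fiberwise_subtype E Prod.snd signal,
      ← Fintype.prod_fiberwise_subtype E Prod.fst signal]
    refine Fintype.prod_congr _ _ fun j => Fintype.prod_congr _ _ ?_
    rintro ⟨e, he, rfl⟩
    rfl
  simp only [Finset.prod_mul_distrib, hsignals]
  exact mul_right_comm _ _ _

end CausalModel

theorem classical_limit_markov_condition_general
    (n : ℕ) (E : Finset (Fin n × Fin n))
    (X Z I : Fin n → Type)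
    [∀ j, Fintype (X j)] [∀ j, DecidableEq (X j)]
    [∀ j, Fintype (Z j)] [∀ j, DecidableEq (Z j)]
    -- mechanisms P(z_j | pa_j)
    (Pz : ∀ j : Fin n,
      (∀ e : {e : Fin n × Fin n // e ∈ E ∧ e.2 = j}, X e.1.1) → Z j → ℝ)
    (hPz0 : ∀ j pa z, 0 ≤ Pz j pa z)
    (hPz1 : ∀ j pa, ∑ z, Pz j pa z = 1)
    -- per-edge output distributions P(s_e | x_j)
    (Po : ∀ j : Fin n, ∀ _e : {e : Fin n × Fin n // e ∈ E ∧ e.1 = j}, X j → X j → ℝ)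
    (hPo0 : ∀ j e s x, 0 ≤ Po j e s x)
    (hPo1 : ∀ j e x, ∑ s, Po j e s x = 1)
    -- measurement-outcome distributions P(x_j | z_j, i_j)
    (Px : ∀ j : Fin n, Z j → I j → X j → ℝ)
    (hPx0 : ∀ j z i x, 0 ≤ Px j z i x)
    (hPx1 : ∀ j z i, ∑ x, Px j z i x = 1)
    -- the local diagonal operations M̄_{x_j|i_j}
    (Mloc : ∀ j : Fin n, X j → I j →
      Matrix (Z j × (∀ _e : {e : Fin n × Fin n // e ∈ E ∧ e.1 = j}, X j))
             (Z j × (∀ _e : {e : Fin n × Fin n // e ∈ E ∧ e.1 = j}, X j)) ℂ)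
    (hMloc : ∀ j xj ij, Mloc j xj ij =
      Matrix.diagonal (fun p =>
        (((∏ e, Po j e (p.2 e) xj) * Px j p.1 ij xj : ℝ) : ℂ)))
    -- the diagonal process matrix W = ⊗_j T_j
    (W : Matrix
      (∀ j : Fin n, Z j × (∀ _e : {e : Fin n × Fin n // e ∈ E ∧ e.1 = j}, X j))
      (∀ j : Fin n, Z j × (∀ _e : {e : Fin n × Fin n // e ∈ E ∧ e.1 = j}, X j)) ℂ)
    (hW : ∀ a b, W a b = if a = b then
      (((∏ j : Fin n,
        Pz j (fun e => (a e.1.1).2 ⟨e.1, e.2.1, rfl⟩) (a j).1 : ℝ)) : ℂ)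
      else 0) :
    ∃ Q : ∀ j : Fin n,
        (∀ e : {e : Fin n × Fin n // e ∈ E ∧ e.2 = j}, X e.1.1) → I j → X j → ℝ,
      (∀ j pa i x, 0 ≤ Q j pa i x) ∧
      (∀ j pa i, ∑ x, Q j pa i x = 1) ∧
      (∀ (x : ∀ j, X j) (i : ∀ j, I j),
        ((Matrix.of fun (a b : ∀ j : Fin n, Z j ×
            (∀ _e : {e : Fin n × Fin n // e ∈ E ∧ e.1 = j}, X j)) =>
          ∏ j : Fin n, Mloc j (x j) (i j) (a j) (b j)) * W).trace
        = ∏ j : Fin n, ((Q j (fun e => x e.1.1) (i j) (x j) : ℝ) : ℂ)) := by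
  refine ⟨classicalKernel E Pz Po Px, classicalKernel_nonneg hPz0 hPo0 hPx0,
    sum_classicalKernel hPz1 hPo1 hPx1, fun x i => ?_⟩
  simp only [hMloc]
  rw [Matrix.of_prod_diagonal, Matrix.trace]
  simp only [Matrix.diag_apply, Matrix.diagonal_mul, hW, if_true]
  rw [← Complex.ofReal_prod, ← sum_prod_eq_prod_classicalKernel]
  push_cast
  rfl

/-- Classical limit of a Markov quantum causal model: for a process matrix
`W = ⊗_j T_j^{PA_j I_j}` with each `T_j` diagonal in a fixed pointer basis (with
diagonal entries `P(z_j | pa_j)`), and local operations diagonal of the form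
`M̄_{x_j|i_j} = Σ_{z_j,o_j} P(o_j | x_j) P(x_j | z_j, i_j) |z_j⟩⟨z_j| ⊗ |o_j⟩⟨o_j|`
(with the outputs along different outgoing edges independent given `x_j`), the
resulting probability `P(x|i) = Tr[⊗_j M̄_{x_j|i_j} · W]` factorises as
`Π_j Q_j(x_j | pa_j, i_j)` for conditional probabilities `Q_j`, where `pa_j` is the
tuple of outcomes at the parent laboratories: the classical causal Markov condition
holds for a DAG isomorphic to the quantum one. -/
theorem classical_limit_markov_condition
    (n : ℕ) (E : Finset (Fin n × Fin n))
    (hacyclic : ∃ r : Fin n → ℕ, ∀ e ∈ E, r e.1 < r e.2)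
    (X Z I : Fin n → Type)
    [∀ j, Fintype (X j)] [∀ j, DecidableEq (X j)]
    [∀ j, Fintype (Z j)] [∀ j, DecidableEq (Z j)]
    -- mechanisms P(z_j | pa_j)
    (Pz : ∀ j : Fin n,
      (∀ e : {e : Fin n × Fin n // e ∈ E ∧ e.2 = j}, X e.1.1) → Z j → ℝ)
    (hPz0 : ∀ j pa z, 0 ≤ Pz j pa z)
    (hPz1 : ∀ j pa, ∑ z, Pz j pa z = 1)
    -- per-edge output distributions P(s_e | x_j)
    (Po : ∀ j : Fin n, ∀ _e : {e : Fin n × Fin n // e ∈ E ∧ e.1 = j}, X j → X j → ℝ)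
    (hPo0 : ∀ j e s x, 0 ≤ Po j e s x)
    (hPo1 : ∀ j e x, ∑ s, Po j e s x = 1)
    -- measurement-outcome distributions P(x_j | z_j, i_j)
    (Px : ∀ j : Fin n, Z j → I j → X j → ℝ)
    (hPx0 : ∀ j z i x, 0 ≤ Px j z i x)
    (hPx1 : ∀ j z i, ∑ x, Px j z i x = 1)
    -- the local diagonal operations M̄_{x_j|i_j}
    (Mloc : ∀ j : Fin n, X j → I j →
      Matrix (Z j × (∀ _e : {e : Fin n × Fin n // e ∈ E ∧ e.1 = j}, X j))
             (Z j × (∀ _e : {e : Fin n × Fin n // e ∈ E ∧ e.1 = j}, X j)) ℂ)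
    (hMloc : ∀ j xj ij, Mloc j xj ij =
      Matrix.diagonal (fun p =>
        (((∏ e, Po j e (p.2 e) xj) * Px j p.1 ij xj : ℝ) : ℂ)))
    -- the diagonal process matrix W = ⊗_j T_j
    (W : Matrix
      (∀ j : Fin n, Z j × (∀ _e : {e : Fin n × Fin n // e ∈ E ∧ e.1 = j}, X j))
      (∀ j : Fin n, Z j × (∀ _e : {e : Fin n × Fin n // e ∈ E ∧ e.1 = j}, X j)) ℂ)
    (hW : ∀ a b, W a b = if a = b then
      (((∏ j : Fin n,
        Pz j (fun e => (a e.1.1).2 ⟨e.1, e.2.1, rfl⟩) (a j).1 : ℝ)) : ℂ)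
      else 0) :
    ∃ Q : ∀ j : Fin n,
        (∀ e : {e : Fin n × Fin n // e ∈ E ∧ e.2 = j}, X e.1.1) → I j → X j → ℝ,
      (∀ j pa i x, 0 ≤ Q j pa i x) ∧
      (∀ j pa i, ∑ x, Q j pa i x = 1) ∧
      (∀ (x : ∀ j, X j) (i : ∀ j, I j),
        ((Matrix.of fun (a b : ∀ j : Fin n, Z j ×
            (∀ _e : {e : Fin n × Fin n // e ∈ E ∧ e.1 = j}, X j)) =>
          ∏ j : Fin n, Mloc j (x j) (i j) (a j) (b j)) * W).trace
        = ∏ j : Fin n, ((Q j (fun e => x e.1.1) (i j) (x j) : ℝ) : ℂ)) :=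
  classical_limit_markov_condition_general n E X Z I Pz hPz0 hPz1 Po hPo0 hPo1 Px hPx0 hPx1 Mloc
    hMloc W hW
end

section
/- For discrete random variables: if conditional probabilities P(o_j, x_j | z_j, i_j) factorise as P(o_j | x_j) P(x_j | z_j, i_j) and the latent mechanism gives P(z_j | pa_j) where pa_j is a function of the outputs {o_k} of parent nodes, then Σ_{o, z} Π_j P(o_j, x_j | z_j, i_j) P(z_j | pa_j) = Π_j P(x_j | pa_j(x), i_j), where pa_j(x) substitutes each parent output variable by the parent's observed value x_k (using that Σ_{o_j} with P(o_j | x_j) concentrated appropriately marginalises to substitution). -/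
theorem sum_prod_boole_broadcast_mul {R ι : Type*} [CommSemiring R] [Fintype ι] [DecidableEq ι]
    {α β : ι → Type*} [∀ j, Fintype (α j)] [∀ j, DecidableEq (α j)]
    [∀ j, Fintype (β j)] [∀ j, DecidableEq (β j)]
    (x : ∀ j, α j) (F : (∀ j, β j → α j) → R) :
    ∑ o : ∀ j, β j → α j, (∏ j, if ∀ e, o j e = x j then (1 : R) else 0) * F o =
      F fun j _ => x j := by
  simp_rw [Finset.prod_boole, Finset.mem_univ, true_imp_iff, ← funext_iff, boole_mul]
  exact Fintype.sum_ite_eq' _ F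

theorem classical_markov_core_general
    (n : ℕ) (E : Finset (Fin n × Fin n))
    (X Z I : Fin n → Type)
    [∀ j, Fintype (X j)] [∀ j, DecidableEq (X j)] [∀ j, Fintype (Z j)]
    (Pz : ∀ j : Fin n,
      (∀ e : {e : Fin n × Fin n // e ∈ E ∧ e.2 = j}, X e.1.1) → Z j → ℝ)
    (Px : ∀ j : Fin n, Z j → I j → X j → ℝ)
    (x : ∀ j, X j) (i : ∀ j, I j) :
    (∑ o : ∀ j : Fin n, (∀ _e : {e : Fin n × Fin n // e ∈ E ∧ e.1 = j}, X j),
      ∑ z : ∀ j, Z j,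
      ∏ j : Fin n,
        (if ∀ e, o j e = x j then (1 : ℝ) else 0) *
        Px j (z j) (i j) (x j) *
        Pz j (fun e => o e.1.1 ⟨e.1, e.2.1, rfl⟩) (z j))
    = ∏ j : Fin n,
        ∑ zj : Z j, Px j zj (i j) (x j) * Pz j (fun e => x e.1.1) zj := by
  -- The deltas collapse the sum over `o` to the broadcast of `x`; the sum over `z` then factorises.
  simp_rw [mul_assoc, Finset.prod_mul_distrib, ← Finset.mul_sum]
  rw [sum_prod_boole_broadcast_mul x, Fintype.prod_sum]
  simp only [Finset.prod_mul_distrib]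

/-- The classical-probability core of the quantum-to-classical limit theorem.
For discrete random variables: if conditional probabilities factorise as
`P(o_j, x_j | z_j, i_j) = P(o_j | x_j) P(x_j | z_j, i_j)` with
`P(o_j | x_j)` the Kronecker delta broadcasting `x_j` along the outgoing edges of
node `j`, and the latent mechanism gives `P(z_j | pa_j)` where `pa_j` collects the
outputs of the parent nodes, then
`Σ_{o,z} Π_j P(o_j, x_j | z_j, i_j) P(z_j | pa_j(o)) = Π_j P(x_j | pa_j(x), i_j)`,
with `P(x_j | pa, i) := Σ_z P(x_j | z, i) P(z | pa)` and `pa_j(x)` obtained by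
substituting each parent output by the parent's observed value. -/
theorem classical_markov_core
    (n : ℕ) (E : Finset (Fin n × Fin n))
    (hacyclic : ∃ r : Fin n → ℕ, ∀ e ∈ E, r e.1 < r e.2)
    (X Z I : Fin n → Type)
    [∀ j, Fintype (X j)] [∀ j, DecidableEq (X j)] [∀ j, Fintype (Z j)]
    (Pz : ∀ j : Fin n,
      (∀ e : {e : Fin n × Fin n // e ∈ E ∧ e.2 = j}, X e.1.1) → Z j → ℝ)
    (hPz0 : ∀ j pa z, 0 ≤ Pz j pa z)
    (hPz1 : ∀ j pa, ∑ z, Pz j pa z = 1)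
    (Px : ∀ j : Fin n, Z j → I j → X j → ℝ)
    (hPx0 : ∀ j z i x, 0 ≤ Px j z i x)
    (hPx1 : ∀ j z i, ∑ x, Px j z i x = 1)
    (x : ∀ j, X j) (i : ∀ j, I j) :
    (∑ o : ∀ j : Fin n, (∀ _e : {e : Fin n × Fin n // e ∈ E ∧ e.1 = j}, X j),
      ∑ z : ∀ j, Z j,
      ∏ j : Fin n,
        (if ∀ e, o j e = x j then (1 : ℝ) else 0) *
        Px j (z j) (i j) (x j) *
        Pz j (fun e => o e.1.1 ⟨e.1, e.2.1, rfl⟩) (z j))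
    = ∏ j : Fin n,
        ∑ zj : Z j, Px j zj (i j) (x j) * Pz j (fun e => x e.1.1) zj :=
  classical_markov_core_general n E X Z I Pz Px x i
end

section
/- Given a classical causal model (DAG with conditional probabilities P(x_j | pa_j)), the diagonal process matrix W = ⊗_j T_j with T_j = Σ_{z_j, pa_j} P(z_j | pa_j) |pa_j⟩⟨pa_j| ⊗ |z_j⟩⟨z_j|, together with the rank-one diagonal instruments M_{x_j} = |x_j⟩⟨x_j| ⊗ ⊗_{e ∈ out(j)} |x_j⟩⟨x_j|, reproduces the classical joint distribution: Tr[⊗_j M_{x_j} · W] = Π_j P(x_j | pa_j). -/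
open Matrix BigOperators

/-! Everything is diagonal in the product basis, so the trace is a sum of products of diagonal
entries. The instruments' entries multiply to the indicator of the single basis state in which
every laboratory records `x j` on its input and on each outgoing copy, and at that state the
diagonal entry of `W` is `∏ j, P(x_j | pa_j)`. -/

theorem Fintype.prod_ite_apply_eq {ι : Type*} [Fintype ι] {κ : ι → Type*}
    [DecidableEq (∀ i, κ i)] [∀ i, DecidableEq (κ i)] {M : Type*} [CommMonoidWithZero M]
    (a b : ∀ i, κ i) :
    (∏ i, if a i = b i then (1 : M) else 0) = if a = b then 1 else 0 := by
  rw [Finset.prod_boole]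
  simp only [Finset.mem_univ, forall_const, ← funext_iff]

namespace Matrix

theorem of_prod_diagonal_s16 {ι : Type*} [Fintype ι] {κ : ι → Type*} [DecidableEq (∀ i, κ i)]
    [∀ i, DecidableEq (κ i)] {R : Type*} [CommMonoidWithZero R] (d : ∀ i, κ i → R) :
    Matrix.of (fun a b : ∀ i, κ i => ∏ i, diagonal (d i) (a i) (b i)) =
      diagonal fun a => ∏ i, d i (a i) := by
  ext a b
  by_cases hab : a = b
  · subst hab
    simp
  · obtain ⟨i, hi⟩ := Function.ne_iff.mp hab
    rw [of_apply, diagonal_apply_ne _ hab]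
    exact Finset.prod_eq_zero (Finset.mem_univ i) (diagonal_apply_ne _ hi)

theorem trace_diagonal_ite_eq_mul_diagonal {n R : Type*} [Fintype n] [DecidableEq n]
    [NonAssocSemiring R] (a₀ : n) (w : n → R) :
    (diagonal (fun a => if a = a₀ then 1 else 0) * diagonal w).trace = w a₀ := by
  simp [diagonal_mul_diagonal, trace_diagonal]

end Matrix

theorem classical_model_from_quantum_general
    (n : ℕ) (E : Finset (Fin n × Fin n))
    (X : Fin n → Type) [∀ j, Fintype (X j)] [∀ j, DecidableEq (X j)]
    -- the classical conditional probabilities P(z_j | pa_j)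
    (P : ∀ j : Fin n,
      (∀ e : {e : Fin n × Fin n // e ∈ E ∧ e.2 = j}, X e.1.1) → X j → ℝ)
    -- the rank-one diagonal instruments M_{x_j}
    (Mloc : ∀ j : Fin n, X j →
      Matrix (X j × (∀ _e : {e : Fin n × Fin n // e ∈ E ∧ e.1 = j}, X j))
             (X j × (∀ _e : {e : Fin n × Fin n // e ∈ E ∧ e.1 = j}, X j)) ℂ)
    (hMloc : ∀ j xj, Mloc j xj =
      Matrix.diagonal (fun p =>
        if p.1 = xj ∧ (∀ e, p.2 e = xj) then (1 : ℂ) else 0))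
    -- the diagonal process matrix W = ⊗_j T_j
    (W : Matrix
      (∀ j : Fin n, X j × (∀ _e : {e : Fin n × Fin n // e ∈ E ∧ e.1 = j}, X j))
      (∀ j : Fin n, X j × (∀ _e : {e : Fin n × Fin n // e ∈ E ∧ e.1 = j}, X j)) ℂ)
    (hW : ∀ a b, W a b = if a = b then
      (((∏ j : Fin n,
        P j (fun e => (a e.1.1).2 ⟨e.1, e.2.1, rfl⟩) (a j).1 : ℝ)) : ℂ)
      else 0)
    (x : ∀ j, X j) :
    ((Matrix.of fun (a b : ∀ j : Fin n, X j ×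
        (∀ _e : {e : Fin n × Fin n // e ∈ E ∧ e.1 = j}, X j)) =>
      ∏ j : Fin n, Mloc j (x j) (a j) (b j)) * W).trace
    = ∏ j : Fin n, ((P j (fun e => x e.1.1) (x j) : ℝ) : ℂ) := by
  classical
  let recorded : ∀ j, X j × (∀ _e : {e : Fin n × Fin n // e ∈ E ∧ e.1 = j}, X j) :=
    fun j => (x j, fun _ => x j)
  have hM : ∀ j, Mloc j (x j) = diagonal fun p => if p = recorded j then 1 else 0 := by
    intro j
    simp only [hMloc, recorded, Prod.ext_iff, funext_iff]
  have hW' : W = diagonal fun a =>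
      ((∏ j, P j (fun e => (a e.1.1).2 ⟨e.1, e.2.1, rfl⟩) (a j).1 : ℝ) : ℂ) := by
    ext a b
    rw [hW, diagonal_apply]
    congr
  rw [hW']
  simp only [hM, of_prod_diagonal_s16, Fintype.prod_ite_apply_eq, trace_diagonal_ite_eq_mul_diagonal]
  exact Complex.ofReal_prod _ _

/-- Every classical causal model is the classical limit of a Markov quantum causal
model with the same causal structure: the diagonal process matrix
`W = ⊗_j T_j`, `T_j = Σ_{z_j, pa_j} P(z_j|pa_j) |pa_j⟩⟨pa_j| ⊗ |z_j⟩⟨z_j|`, together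
with the rank-one diagonal instruments
`M_{x_j} = |x_j⟩⟨x_j| ⊗ ⊗_{e ∈ out(j)} |x_j⟩⟨x_j|`, reproduces the classical joint
distribution: `Tr[⊗_j M_{x_j} · W] = Π_j P(x_j | pa_j)`. -/
theorem classical_model_from_quantum
    (n : ℕ) (E : Finset (Fin n × Fin n))
    (hacyclic : ∃ r : Fin n → ℕ, ∀ e ∈ E, r e.1 < r e.2)
    (X : Fin n → Type) [∀ j, Fintype (X j)] [∀ j, DecidableEq (X j)]
    -- the classical conditional probabilities P(z_j | pa_j)
    (P : ∀ j : Fin n,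
      (∀ e : {e : Fin n × Fin n // e ∈ E ∧ e.2 = j}, X e.1.1) → X j → ℝ)
    (hP0 : ∀ j pa z, 0 ≤ P j pa z)
    (hP1 : ∀ j pa, ∑ z, P j pa z = 1)
    -- the rank-one diagonal instruments M_{x_j}
    (Mloc : ∀ j : Fin n, X j →
      Matrix (X j × (∀ _e : {e : Fin n × Fin n // e ∈ E ∧ e.1 = j}, X j))
             (X j × (∀ _e : {e : Fin n × Fin n // e ∈ E ∧ e.1 = j}, X j)) ℂ)
    (hMloc : ∀ j xj, Mloc j xj =
      Matrix.diagonal (fun p =>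
        if p.1 = xj ∧ (∀ e, p.2 e = xj) then (1 : ℂ) else 0))
    -- the diagonal process matrix W = ⊗_j T_j
    (W : Matrix
      (∀ j : Fin n, X j × (∀ _e : {e : Fin n × Fin n // e ∈ E ∧ e.1 = j}, X j))
      (∀ j : Fin n, X j × (∀ _e : {e : Fin n × Fin n // e ∈ E ∧ e.1 = j}, X j)) ℂ)
    (hW : ∀ a b, W a b = if a = b then
      (((∏ j : Fin n,
        P j (fun e => (a e.1.1).2 ⟨e.1, e.2.1, rfl⟩) (a j).1 : ℝ)) : ℂ)
      else 0)
    (x : ∀ j, X j) :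
    ((Matrix.of fun (a b : ∀ j : Fin n, X j ×
        (∀ _e : {e : Fin n × Fin n // e ∈ E ∧ e.1 = j}, X j)) =>
      ∏ j : Fin n, Mloc j (x j) (a j) (b j)) * W).trace
    = ∏ j : Fin n, ((P j (fun e => x e.1.1) (x j) : ℝ) : ℂ) :=
  classical_model_from_quantum_general n E X P Mloc hMloc W hW x
end
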